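/- arXiv:2408.13547 — 5 statements merged into one kernel-verified Lean document; each statement's English description precedes it below -/
import Mathlib

section
/- In the matrix FSD setup, for every integer t ≥ 0 the approximation error satisfies E(t+1) ≤ κ · E(t) + α · μ · ∑_{i=1}^{n−1} E(t−i). (Lemma C.1 of the paper: the error at iteration t+1 is bounded by a linear combination of the errors from the previous n iterations, with coefficients κ and αμ.) -/
/-!
Write `j = t mod n` and `E(s) = X(s) - X*`. Since `i ↦ (t - i) mod n` permutes the slices,
`B = ∑ᵢ M_{(t-i) mod n} X*`, so the residual is `R(t+1) = -∑ᵢ M_{(t-i) mod n} E(t-i)` and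
`E(t+1) = (I - α M_jᵀ M_j) E(t) - α ∑_{i=1}^{n-1} M_jᵀ M_{(t-i) mod n} E(t-i)`.
For `1 ≤ i ≤ n-1` the slice `(t-i) mod n` differs from `j`, so every cross term is controlled
by `μ`, and each product is estimated by `‖A E‖_F ≤ ‖A‖₂ ‖E‖_F`.
-/

open Matrix Finset Filter

noncomputable def frobNorm {m k : ℕ} (A : Matrix (Fin m) (Fin k) ℝ) : ℝ :=
  Real.sqrt (∑ i, ∑ j, (A i j) ^ 2)

noncomputable def specNorm {m k : ℕ} (A : Matrix (Fin m) (Fin k) ℝ) : ℝ :=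
  ‖LinearMap.toContinuousLinearMap (Matrix.toEuclideanLin A)‖

def idx (n : ℕ) (hn : 0 < n) (a : ℤ) : Fin n :=
  ⟨(a % (n : ℤ)).toNat, by
    have h1 : (0 : ℤ) < (n : ℤ) := by exact_mod_cast hn
    have h2 := Int.emod_nonneg a h1.ne'
    have h3 := Int.emod_lt_of_pos a h1
    omega⟩

noncomputable def kappaFSD {n N K : ℕ} (hn : 0 < n) (α : ℝ)
    (M : Fin n → Matrix (Fin N) (Fin K) ℝ) : ℝ :=
  Finset.univ.sup' (Finset.univ_nonempty_iff.mpr ⟨⟨0, hn⟩⟩)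
    fun i => specNorm ((1 : Matrix (Fin K) (Fin K) ℝ) - α • ((M i)ᵀ * M i))

noncomputable def muFSD {n N K : ℕ} (hn : 2 ≤ n)
    (M : Fin n → Matrix (Fin N) (Fin K) ℝ) : ℝ :=
  ((Finset.univ : Finset (Fin n × Fin n)).filter fun p => p.1 ≠ p.2).sup'
    ⟨(⟨0, by omega⟩, ⟨1, by omega⟩), by
      refine Finset.mem_filter.mpr ⟨Finset.mem_univ _, ?_⟩
      simp [Fin.ext_iff]⟩
    fun p => specNorm ((M p.1)ᵀ * M p.2)

section Frobenius

open scoped Matrix.Norms.Frobenius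

theorem frobNorm_eq_norm {m k : ℕ} (A : Matrix (Fin m) (Fin k) ℝ) : frobNorm A = ‖A‖ := by
  simp [frobNorm, frobenius_norm_def, Real.sqrt_eq_rpow, sq_abs]

theorem frobNorm_nonneg {m k : ℕ} (A : Matrix (Fin m) (Fin k) ℝ) : 0 ≤ frobNorm A :=
  Real.sqrt_nonneg _

theorem frobNorm_sub_le {m k : ℕ} (A B : Matrix (Fin m) (Fin k) ℝ) :
    frobNorm (A - B) ≤ frobNorm A + frobNorm B := by
  simpa only [frobNorm_eq_norm] using norm_sub_le A B

theorem frobNorm_smul {m k : ℕ} (c : ℝ) (A : Matrix (Fin m) (Fin k) ℝ) :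
    frobNorm (c • A) = |c| * frobNorm A := by
  simp only [frobNorm_eq_norm, norm_smul, Real.norm_eq_abs]

theorem frobNorm_sum_le {m k : ℕ} {ι : Type*} (s : Finset ι)
    (f : ι → Matrix (Fin m) (Fin k) ℝ) :
    frobNorm (∑ i ∈ s, f i) ≤ ∑ i ∈ s, frobNorm (f i) := by
  simpa only [frobNorm_eq_norm] using norm_sum_le s f

end Frobenius

theorem frobNorm_eq_sqrt_sum_norm_col_sq {m k : ℕ} (A : Matrix (Fin m) (Fin k) ℝ) :
    frobNorm A = √(∑ j, ‖(WithLp.toLp 2 (Aᵀ j) : EuclideanSpace ℝ (Fin m))‖ ^ 2) := by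
  simp only [frobNorm, EuclideanSpace.real_norm_sq_eq]
  rw [Finset.sum_comm]
  rfl

theorem norm_toLp_mulVec_le_specNorm_mul {m k : ℕ} (A : Matrix (Fin m) (Fin k) ℝ)
    (v : Fin k → ℝ) :
    ‖(WithLp.toLp 2 (A *ᵥ v) : EuclideanSpace ℝ (Fin m))‖ ≤
      specNorm A * ‖(WithLp.toLp 2 v : EuclideanSpace ℝ (Fin k))‖ :=
  (LinearMap.toContinuousLinearMap (toEuclideanLin A)).le_opNorm (WithLp.toLp 2 v)

theorem frobNorm_mul_le {m k p : ℕ} (A : Matrix (Fin m) (Fin k) ℝ)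
    (B : Matrix (Fin k) (Fin p) ℝ) :
    frobNorm (A * B) ≤ specNorm A * frobNorm B := by
  have hcol : ∀ j, (A * B)ᵀ j = A *ᵥ Bᵀ j := fun j => by
    ext i; simp [Matrix.mul_apply, Matrix.mulVec, dotProduct]
  have hA : 0 ≤ specNorm A := norm_nonneg _
  rw [frobNorm_eq_sqrt_sum_norm_col_sq, frobNorm_eq_sqrt_sum_norm_col_sq,
    ← Real.sqrt_sq hA, ← Real.sqrt_mul (sq_nonneg _), Finset.mul_sum]
  refine Real.sqrt_le_sqrt (Finset.sum_le_sum fun j _ => ?_)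
  rw [hcol, ← mul_pow]
  exact pow_le_pow_left₀ (norm_nonneg _) (norm_toLp_mulVec_le_specNorm_mul A _) 2

theorem idx_eq_idx_iff {n : ℕ} (hn : 0 < n) (a b : ℤ) :
    idx n hn a = idx n hn b ↔ a ≡ b [ZMOD n] := by
  have hn' : (n : ℤ) ≠ 0 := by exact_mod_cast hn.ne'
  have ha := Int.emod_nonneg a hn'
  have hb := Int.emod_nonneg b hn'
  simp only [idx, Fin.ext_iff, Int.ModEq]
  omega

theorem idx_sub_injective {n : ℕ} (hn : 0 < n) (t : ℤ) :
    Function.Injective fun i : Fin n => idx n hn (t - (i : ℕ)) := by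
  intro i j hij
  have hdvd : (n : ℤ) ∣ (i : ℕ) - (j : ℕ) := by
    simpa using ((idx_eq_idx_iff hn _ _).mp hij).dvd
  have := Int.eq_zero_of_abs_lt_dvd hdvd (by rw [abs_lt]; omega)
  exact Fin.ext (by omega)

theorem idx_sub_ne_idx {n : ℕ} (hn : 0 < n) (t : ℤ) {i : ℕ} (hi0 : 0 < i) (hin : i < n) :
    idx n hn (t - i) ≠ idx n hn t := by
  intro h
  have hdvd : (n : ℤ) ∣ i := by simpa using ((idx_eq_idx_iff hn _ _).mp h).dvd
  have := Int.eq_zero_of_abs_lt_dvd hdvd (by rw [abs_lt]; omega)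
  omega

theorem sum_range_idx_sub {β : Type*} [AddCommMonoid β] {n : ℕ} (hn : 0 < n) (t : ℤ)
    (f : Fin n → β) : ∑ i ∈ range n, f (idx n hn (t - i)) = ∑ j, f j := by
  rw [← Fin.sum_univ_eq_sum_range (fun i => f (idx n hn (t - i)))]
  exact (idx_sub_injective hn t).bijective_of_finite.sum_comp f

theorem sub_eq_of_eq_add_smul_transpose_mul {S m k p ι : Type*} [CommRing S] [Fintype m]
    [Fintype k] [DecidableEq k] (s : Finset ι) (α : S) (A : Matrix m k S)
    (F : ι → Matrix m k S) (E : ι → Matrix k p S) (X₀ X' Xs : Matrix k p S) (R : Matrix m p S)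
    (hX' : X' = X₀ + α • (Aᵀ * R)) (hR : R = -(A * (X₀ - Xs) + ∑ i ∈ s, F i * E i)) :
    X' - Xs = (1 - α • (Aᵀ * A)) * (X₀ - Xs) - α • ∑ i ∈ s, (Aᵀ * F i) * E i := by
  subst hX' hR
  simp only [Matrix.mul_neg, Matrix.mul_add, Matrix.sub_mul, Matrix.one_mul, Matrix.mul_sum,
    Matrix.smul_mul, Matrix.mul_assoc, smul_neg, smul_add]
  abel

theorem frobNorm_mul_sub_smul_sum_le {K P : ℕ} {ι : Type*} (s : Finset ι) {α : ℝ}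
    (hα : 0 ≤ α) (C : Matrix (Fin K) (Fin K) ℝ) (D : ι → Matrix (Fin K) (Fin K) ℝ)
    (E₀ : Matrix (Fin K) (Fin P) ℝ) (E : ι → Matrix (Fin K) (Fin P) ℝ) :
    frobNorm (C * E₀ - α • ∑ i ∈ s, D i * E i) ≤
      specNorm C * frobNorm E₀ + α * ∑ i ∈ s, specNorm (D i) * frobNorm (E i) := by
  refine (frobNorm_sub_le _ _).trans (add_le_add (frobNorm_mul_le C E₀) ?_)
  rw [frobNorm_smul, abs_of_nonneg hα]
  gcongr
  exact (frobNorm_sum_le _ _).trans (Finset.sum_le_sum fun i _ => frobNorm_mul_le _ _)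

theorem specNorm_le_kappaFSD {n N K : ℕ} (hn : 0 < n) (α : ℝ)
    (M : Fin n → Matrix (Fin N) (Fin K) ℝ) (i : Fin n) :
    specNorm (1 - α • ((M i)ᵀ * M i)) ≤ kappaFSD hn α M :=
  Finset.le_sup' (fun i => specNorm (1 - α • ((M i)ᵀ * M i))) (Finset.mem_univ i)

theorem specNorm_le_muFSD {n N K : ℕ} (hn : 2 ≤ n) (M : Fin n → Matrix (Fin N) (Fin K) ℝ)
    {i j : Fin n} (hij : i ≠ j) : specNorm ((M i)ᵀ * M j) ≤ muFSD hn M :=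
  Finset.le_sup' (fun p : Fin n × Fin n => specNorm ((M p.1)ᵀ * M p.2))
    (Finset.mem_filter.mpr ⟨Finset.mem_univ (i, j), hij⟩)

theorem fsd_error_one_step_bound
    {n N K P : ℕ} (hn : 2 ≤ n)
    (M : Fin n → Matrix (Fin N) (Fin K) ℝ)
    (Xstar : Matrix (Fin K) (Fin P) ℝ)
    (B : Matrix (Fin N) (Fin P) ℝ) (hB : B = (∑ i, M i) * Xstar)
    (α : ℝ) (hα : 0 < α)
    (X : ℤ → Matrix (Fin K) (Fin P) ℝ) (R : ℤ → Matrix (Fin N) (Fin P) ℝ)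
    (hR : ∀ t : ℤ, 0 ≤ t →
      R (t + 1) = B - ∑ i : Fin n, M (idx n (by omega) (t - ((i : ℕ) : ℤ))) * X (t - ((i : ℕ) : ℤ)))
    (hXstep : ∀ t : ℤ, 0 ≤ t →
      X (t + 1) = X t + α • ((M (idx n (by omega) t))ᵀ * R (t + 1))) :
    ∀ t : ℤ, 0 ≤ t →
      frobNorm (X (t + 1) - Xstar) ≤
        kappaFSD (show 0 < n by omega) α M * frobNorm (X t - Xstar) +
          α * muFSD hn M * ∑ i ∈ Finset.Icc 1 (n - 1), frobNorm (X (t - (i : ℤ)) - Xstar) := by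
  intro t ht
  have hn0 : 0 < n := by omega
  have hrange : range n = insert 0 (Icc 1 (n - 1)) := by
    ext i; simp only [mem_range, mem_insert, mem_Icc]; omega
  have hres : R (t + 1) = -(M (idx n hn0 t) * (X t - Xstar) +
      ∑ i ∈ Icc 1 (n - 1), M (idx n hn0 (t - i)) * (X (t - i) - Xstar)) := by
    rw [hR t ht, hB, ← sum_range_idx_sub hn0 t M, Matrix.sum_mul,
      Fin.sum_univ_eq_sum_range (fun i => M (idx n hn0 (t - i)) * X (t - i)),
      hrange, sum_insert (by simp), sum_insert (by simp)]
    simp only [Matrix.mul_sub, sum_sub_distrib, Nat.cast_zero, sub_zero]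
    abel
  have herr := sub_eq_of_eq_add_smul_transpose_mul _ _ _ _ _ _ _ _ _ (hXstep t ht) hres
  calc frobNorm (X (t + 1) - Xstar)
      ≤ specNorm (1 - α • ((M (idx n hn0 t))ᵀ * M (idx n hn0 t))) * frobNorm (X t - Xstar) +
          α * ∑ i ∈ Icc 1 (n - 1), specNorm ((M (idx n hn0 t))ᵀ * M (idx n hn0 (t - i))) *
            frobNorm (X (t - i) - Xstar) := by
        rw [herr]; exact frobNorm_mul_sub_smul_sum_le _ hα.le _ _ _ _
    _ ≤ kappaFSD hn0 α M * frobNorm (X t - Xstar) +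
          α * ∑ i ∈ Icc 1 (n - 1), muFSD hn M * frobNorm (X (t - i) - Xstar) := by
        gcongr with i hi
        · exact frobNorm_nonneg _
        · exact specNorm_le_kappaFSD hn0 α M _
        · exact frobNorm_nonneg _
        · have hi' := Finset.mem_Icc.mp hi
          exact specNorm_le_muFSD hn M (idx_sub_ne_idx hn0 t (by omega) (by omega)).symm
    _ = _ := by rw [← Finset.mul_sum, mul_assoc]
end

section
/- (Lemma C.2 of the paper.) If E : ℤ → ℝ is an FSD error sequence for parameters n, κ, μ, α, then for every integer t ≥ 1 the approximation error is bounded by E(t) ≤ ε_t · E(0), where ε_t is the recursively defined bounding coefficient. -/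
/-!
The coefficients `ε t` are the variation-of-constants solution of the delayed recurrence
`x (t + 1) = κ x t + α μ ∑_{i=1}^{n-1} x (t - i)` with `x = 1` on `t ≤ 0`, so `ε t * E 0` solves
that recurrence with equality and agrees with `E` on `t ≤ 0`. Since all coefficients are
nonnegative and every delay is at least one, induction on `t` keeps the subsolution `E` below it.
-/

open Matrix Finset Filter

theorem succ_eq_of_variation_of_constants {κ c : ℝ} {g ε : ℤ → ℝ} (h0 : ε 0 = 1)
    (hrec : ∀ t : ℤ, 1 ≤ t →
      ε t = κ ^ t.toNat + c * ∑ j ∈ range t.toNat, κ ^ j * g (t - 1 - (j : ℤ)))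
    (s : ℤ) (hs : 0 ≤ s) : ε (s + 1) = κ * ε s + c * g s := by
  have closed : ∀ m : ℕ,
      ε m = κ ^ m + c * ∑ j ∈ range m, κ ^ j * g ((m : ℤ) - 1 - (j : ℤ)) := by
    rintro (_ | m)
    · simp [h0]
    · simpa using hrec (m + 1 : ℕ) (by omega)
  lift s to ℕ using hs
  have shift : ∀ j ∈ range s, κ ^ (j + 1) * g (((s + 1 : ℕ) : ℤ) - 1 - ((j + 1 : ℕ) : ℤ)) =
      κ * (κ ^ j * g ((s : ℤ) - 1 - (j : ℤ))) := by
    intro j _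
    rw [show ((s + 1 : ℕ) : ℤ) - 1 - ((j + 1 : ℕ) : ℤ) = (s : ℤ) - 1 - (j : ℤ) by push_cast; ring]
    ring
  rw [show (s : ℤ) + 1 = ((s + 1 : ℕ) : ℤ) by push_cast; ring, closed, closed, sum_range_succ',
    sum_congr rfl shift, ← mul_sum]
  rw [Nat.cast_zero, sub_zero, Nat.cast_succ, add_sub_cancel_right]
  ring

theorem le_of_delay_recurrence {κ c : ℝ} (hκ : 0 ≤ κ) (hc : 0 ≤ c) {I : Finset ℕ}
    (hI : ∀ i ∈ I, 1 ≤ i) {u v : ℤ → ℝ}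
    (hu : ∀ t : ℤ, 0 ≤ t → u (t + 1) ≤ κ * u t + c * ∑ i ∈ I, u (t - (i : ℤ)))
    (hv : ∀ t : ℤ, 0 ≤ t → κ * v t + c * ∑ i ∈ I, v (t - (i : ℤ)) ≤ v (t + 1))
    (hinit : ∀ t : ℤ, t ≤ 0 → u t ≤ v t) (t : ℤ) : u t ≤ v t := by
  suffices h : ∀ N : ℕ, ∀ t : ℤ, t ≤ N → u t ≤ v t from h t.toNat t (by omega)
  intro N
  induction N with
  | zero => exact_mod_cast hinit
  | succ N ih =>
    intro t ht
    rcases le_or_gt t N with hle | hgt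
    · exact ih t hle
    obtain rfl : t = (N : ℤ) + 1 := by omega
    calc u ((N : ℤ) + 1)
        ≤ κ * u N + c * ∑ i ∈ I, u ((N : ℤ) - (i : ℤ)) := hu N (by positivity)
      _ ≤ κ * v N + c * ∑ i ∈ I, v ((N : ℤ) - (i : ℤ)) := by
          gcongr with i hi
          · exact ih N le_rfl
          · exact ih _ (by have := hI i hi; omega)
      _ ≤ v ((N : ℤ) + 1) := hv N (by positivity)

theorem fsd_error_bounded_by_eps_general
    (n : ℕ) (κ μ α : ℝ) (hκ : 0 ≤ κ) (hμ : 0 ≤ μ) (hα : 0 ≤ α)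
    (ε : ℤ → ℝ)
    (hε0 : ∀ t : ℤ, t ≤ 0 → ε t = 1)
    (hεrec : ∀ t : ℤ, 1 ≤ t →
      ε t = κ ^ t.toNat + α * μ * ∑ j ∈ Finset.range t.toNat, κ ^ j *
          ∑ i ∈ Finset.Icc 1 (n - 1), ε (t - 1 - (j : ℤ) - (i : ℤ)))
    (E : ℤ → ℝ) (hEneg : ∀ t : ℤ, t ≤ 0 → E t = E 0)
    (hErec : ∀ t : ℤ, 0 ≤ t →
      E (t + 1) ≤ κ * E t + α * μ * ∑ i ∈ Finset.Icc 1 (n - 1), E (t - (i : ℤ))) :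
    ∀ t : ℤ, 1 ≤ t → E t ≤ ε t * E 0 := by
  have hεstep : ∀ s : ℤ, 0 ≤ s →
      ε (s + 1) = κ * ε s + α * μ * ∑ i ∈ Finset.Icc 1 (n - 1), ε (s - (i : ℤ)) :=
    succ_eq_of_variation_of_constants (g := fun s => ∑ i ∈ Finset.Icc 1 (n - 1), ε (s - (i : ℤ)))
      (hε0 0 le_rfl) hεrec
  intro t _
  refine le_of_delay_recurrence (v := fun s => ε s * E 0) hκ (by positivity)
    (fun i hi => (Finset.mem_Icc.mp hi).1) hErec (fun s hs => ?_) (fun s hs => ?_) t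
  · apply le_of_eq
    rw [hεstep s hs, ← sum_mul]
    ring
  · rw [hEneg s hs, hε0 s hs, one_mul]

theorem fsd_error_bounded_by_eps
    (n : ℕ) (hn : 2 ≤ n) (κ μ α : ℝ) (hκ : 0 ≤ κ) (hμ : 0 ≤ μ) (hα : 0 ≤ α)
    (ε : ℤ → ℝ)
    (hε0 : ∀ t : ℤ, t ≤ 0 → ε t = 1)
    (hεrec : ∀ t : ℤ, 1 ≤ t →
      ε t = κ ^ t.toNat + α * μ * ∑ j ∈ Finset.range t.toNat, κ ^ j *
          ∑ i ∈ Finset.Icc 1 (n - 1), ε (t - 1 - (j : ℤ) - (i : ℤ)))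
    (E : ℤ → ℝ) (hEnn : ∀ t : ℤ, 0 ≤ E t) (hEneg : ∀ t : ℤ, t ≤ 0 → E t = E 0)
    (hErec : ∀ t : ℤ, 0 ≤ t →
      E (t + 1) ≤ κ * E t + α * μ * ∑ i ∈ Finset.Icc 1 (n - 1), E (t - (i : ℤ))) :
    ∀ t : ℤ, 1 ≤ t → E t ≤ ε t * E 0 :=
  fsd_error_bounded_by_eps_general n κ μ α hκ hμ hα ε hε0 hεrec E hEneg hErec
end

section
/- (Theorem 4.1 of the paper, abstract sequence form.) Suppose κ + α·μ·(n−1) < 1. Then the bounding coefficients converge to zero, lim_{t→∞} ε_t = 0, and consequently every FSD error sequence E for parameters n, κ, μ, α satisfies lim_{t→∞} E(t) = 0. -/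
/-! Both ε and every FSD error sequence are subsolutions of the delay recursion
`u (t + 1) ≤ κ u t + c ∑_{i=1}^{m} u (t - i)` with `c = α μ`, `m = n - 1`. Since the right-hand side
is monotone in `u`, a subsolution stays below any supersolution with larger initial values. The
step function `ρ ^ ⌊t / (m + 1)⌋` with `ρ = κ + c m < 1` is a supersolution: all `m + 1` values it
feeds into the recursion are at most its value `m + 1` steps back, and it gains a factor `ρ` every
`m + 1` steps. Hence `E t ≤ E 0 · ρ ^ ⌊t / (m + 1)⌋ → 0`. -/

open Finset Filter

noncomputable def delayStep (κ c : ℝ) (m : ℕ) (u : ℤ → ℝ) (t : ℤ) : ℝ :=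
  κ * u t + c * ∑ i ∈ Icc 1 m, u (t - i)

section DelayStep

variable {κ c : ℝ} {m : ℕ}

lemma delayStep_const_mul (C : ℝ) (u : ℤ → ℝ) (t : ℤ) :
    delayStep κ c m (fun s => C * u s) t = C * delayStep κ c m u t := by
  simp only [delayStep, ← mul_sum]
  ring

lemma delayStep_mono (hκ : 0 ≤ κ) (hc : 0 ≤ c) {u v : ℤ → ℝ} {t : ℤ}
    (huv : ∀ s ≤ t, u s ≤ v s) : delayStep κ c m u t ≤ delayStep κ c m v t := by
  unfold delayStep
  gcongr with i
  · exact huv t le_rfl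
  · exact huv _ (by omega)

theorem le_of_delayStep (hκ : 0 ≤ κ) (hc : 0 ≤ c) {u v : ℤ → ℝ} (h0 : ∀ t ≤ 0, u t ≤ v t)
    (hu : ∀ t, 0 ≤ t → u (t + 1) ≤ delayStep κ c m u t)
    (hv : ∀ t, 0 ≤ t → delayStep κ c m v t ≤ v (t + 1)) (t : ℤ) : u t ≤ v t := by
  suffices key : ∀ t, 0 ≤ t → ∀ s ≤ t, u s ≤ v s from
    key (max t 0) (le_max_right t 0) t (le_max_left t 0)
  intro t ht
  induction t, ht using Int.leInduction with
  | base => exact h0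
  | succ t ht ih =>
    intro s hs
    rcases (show s ≤ t ∨ s = t + 1 by omega) with hs | rfl
    · exact ih s hs
    · exact (hu t ht).trans ((delayStep_mono hκ hc ih).trans (hv t ht))

theorem nonneg_of_delayStep_le (hκ : 0 ≤ κ) (hc : 0 ≤ c) {u : ℤ → ℝ} (h0 : ∀ t ≤ 0, 0 ≤ u t)
    (hu : ∀ t, 0 ≤ t → delayStep κ c m u t ≤ u (t + 1)) (t : ℤ) : 0 ≤ u t :=
  le_of_delayStep (u := fun _ => 0) hκ hc h0 (fun _ _ => by simp [delayStep]) hu t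

end DelayStep

noncomputable def geomEnvelope (ρ : ℝ) (m : ℕ) (t : ℤ) : ℝ :=
  ρ ^ (t.toNat / (m + 1))

section GeomEnvelope

variable {ρ : ℝ} {m : ℕ}

lemma geomEnvelope_of_nonpos {t : ℤ} (ht : t ≤ 0) : geomEnvelope ρ m t = 1 := by
  simp [geomEnvelope, Int.toNat_of_nonpos ht]

lemma geomEnvelope_antitone (hρ0 : 0 ≤ ρ) (hρ1 : ρ ≤ 1) : Antitone (geomEnvelope ρ m) :=
  fun _ _ hst => pow_le_pow_of_le_one hρ0 hρ1 (Nat.div_le_div_right (by omega))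

lemma mul_geomEnvelope_le (hρ0 : 0 ≤ ρ) (hρ1 : ρ ≤ 1) (t : ℤ) :
    ρ * geomEnvelope ρ m (t - m) ≤ geomEnvelope ρ m (t + 1) := by
  rw [geomEnvelope, geomEnvelope, ← pow_succ', ← Nat.add_div_right _ m.succ_pos]
  exact pow_le_pow_of_le_one hρ0 hρ1 (Nat.div_le_div_right (by omega))

lemma delayStep_geomEnvelope_le {κ c : ℝ} (hκ : 0 ≤ κ) (hc : 0 ≤ c) (hρ : κ + c * m ≤ ρ)
    (hρ1 : ρ ≤ 1) {t : ℤ} : delayStep κ c m (geomEnvelope ρ m) t ≤ geomEnvelope ρ m (t + 1) := by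
  have hρ0 : 0 ≤ ρ := le_trans (by positivity) hρ
  set W := geomEnvelope ρ m (t - m)
  have hW : ∀ s, t - m ≤ s → geomEnvelope ρ m s ≤ W := fun s hs =>
    geomEnvelope_antitone hρ0 hρ1 hs
  calc delayStep κ c m (geomEnvelope ρ m) t
      ≤ κ * W + c * ∑ _i ∈ Icc 1 m, W := by
        unfold delayStep
        gcongr with i hi
        · exact hW t (by omega)
        · exact hW _ (by simp only [mem_Icc] at hi; omega)
    _ = (κ + c * m) * W := by rw [sum_const, Nat.card_Icc, nsmul_eq_mul, Nat.add_sub_cancel]; ring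
    _ ≤ ρ * W := mul_le_mul_of_nonneg_right hρ (pow_nonneg hρ0 _)
    _ ≤ geomEnvelope ρ m (t + 1) := mul_geomEnvelope_le hρ0 hρ1 t

lemma tendsto_geomEnvelope (hρ0 : 0 ≤ ρ) (hρ1 : ρ < 1) :
    Tendsto (fun t : ℕ => geomEnvelope ρ m t) atTop (nhds 0) :=
  (tendsto_pow_atTop_nhds_zero_of_lt_one hρ0 hρ1).comp (Nat.tendsto_div_const_atTop m.succ_ne_zero)

end GeomEnvelope

theorem tendsto_zero_of_le_delayStep {κ c : ℝ} {m : ℕ} (hκ : 0 ≤ κ) (hc : 0 ≤ c)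
    (hrate : κ + c * m < 1) {E : ℤ → ℝ} (hE : ∀ t, 0 ≤ E t) (hE0 : ∀ t ≤ 0, E t = E 0)
    (hErec : ∀ t, 0 ≤ t → E (t + 1) ≤ delayStep κ c m E t) :
    Tendsto (fun t : ℕ => E t) atTop (nhds 0) := by
  have hbound : ∀ t, E t ≤ E 0 * geomEnvelope (κ + c * m) m t := by
    refine le_of_delayStep hκ hc (fun t ht => ?_) hErec (fun t _ => ?_)
    · rw [geomEnvelope_of_nonpos ht, mul_one, hE0 t ht]
    · rw [delayStep_const_mul]
      exact mul_le_mul_of_nonneg_left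
        (delayStep_geomEnvelope_le hκ hc le_rfl hrate.le) (hE 0)
  have hlim := (tendsto_geomEnvelope (m := m) (by positivity) hrate).const_mul (E 0)
  rw [mul_zero] at hlim
  exact squeeze_zero (fun t => hE t) (fun t => hbound t) hlim

theorem eq_delayStep_of_convolution {κ c : ℝ} {m : ℕ} {ε : ℤ → ℝ} (hε0 : ε 0 = 1)
    (hεrec : ∀ t : ℤ, 1 ≤ t → ε t = κ ^ t.toNat + c * ∑ j ∈ range t.toNat, κ ^ j *
      ∑ i ∈ Icc 1 m, ε (t - 1 - (j : ℤ) - (i : ℤ)))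
    {t : ℤ} (ht : 0 ≤ t) : ε (t + 1) = delayStep κ c m ε t := by
  have hconv : ∀ k : ℕ, ε k = κ ^ k + c * ∑ j ∈ range k, κ ^ j *
      ∑ i ∈ Icc 1 m, ε (k - 1 - (j : ℤ) - (i : ℤ)) := by
    rintro (_ | k)
    · simp [hε0]
    · simpa using hεrec (k + 1 : ℕ) (by omega)
  lift t to ℕ using ht
  have hshift : ∀ j : ℕ, ((t + 1 : ℕ) : ℤ) - 1 - ((j + 1 : ℕ) : ℤ) = t - 1 - j := fun j => by
    push_cast; ring
  rw [delayStep, ← Nat.cast_succ, hconv, hconv, sum_range_succ']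
  have hlast : ((t.succ : ℕ) : ℤ) - 1 - ((0 : ℕ) : ℤ) = t := by push_cast; ring
  simp only [hshift, hlast, pow_zero, one_mul, Nat.succ_eq_add_one, pow_succ', mul_assoc, ← mul_sum]
  ring

open Matrix Finset Filter

theorem eps_and_error_tendsto_zero
    (n : ℕ) (hn : 2 ≤ n) (κ μ α : ℝ) (hκ : 0 ≤ κ) (hμ : 0 ≤ μ) (hα : 0 ≤ α)
    (hrate : κ + α * μ * ((n : ℝ) - 1) < 1)
    (ε : ℤ → ℝ)
    (hε0 : ∀ t : ℤ, t ≤ 0 → ε t = 1)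
    (hεrec : ∀ t : ℤ, 1 ≤ t →
      ε t = κ ^ t.toNat + α * μ * ∑ j ∈ Finset.range t.toNat, κ ^ j *
          ∑ i ∈ Finset.Icc 1 (n - 1), ε (t - 1 - (j : ℤ) - (i : ℤ))) :
    Filter.Tendsto (fun t : ℕ => ε (t : ℤ)) Filter.atTop (nhds 0) ∧
      ∀ E : ℤ → ℝ, (∀ t : ℤ, 0 ≤ E t) → (∀ t : ℤ, t ≤ 0 → E t = E 0) →
        (∀ t : ℤ, 0 ≤ t →
          E (t + 1) ≤ κ * E t + α * μ * ∑ i ∈ Finset.Icc 1 (n - 1), E (t - (i : ℤ))) →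
        Filter.Tendsto (fun t : ℕ => E (t : ℤ)) Filter.atTop (nhds 0) := by
  have hc : 0 ≤ α * μ := mul_nonneg hα hμ
  have hrate' : κ + α * μ * ((n - 1 : ℕ) : ℝ) < 1 := by
    rwa [Nat.cast_sub (by omega), Nat.cast_one]
  have herror := fun E => tendsto_zero_of_le_delayStep (E := E) hκ hc hrate'
  have hεstep : ∀ t, 0 ≤ t → ε (t + 1) = delayStep κ (α * μ) (n - 1) ε t :=
    fun t ht => eq_delayStep_of_convolution (hε0 0 le_rfl) hεrec ht
  have hεnonneg : ∀ t, 0 ≤ ε t :=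
    nonneg_of_delayStep_le hκ hc (fun t ht => by rw [hε0 t ht]; exact zero_le_one)
      fun t ht => (hεstep t ht).ge
  refine ⟨herror ε hεnonneg (fun t ht => by rw [hε0 t ht, hε0 0 le_rfl]) ?_, herror⟩
  exact fun t ht => (hεstep t ht).le
end

section
/- (Uniform error bound for noisy Frontal Slice Descent; quantitative form of Theorem 4.4 of the paper.) Let n ≥ 2 be an integer, let κ, μ, α, η_e be nonnegative reals with c := κ + α·μ·(n−1) < 1, and let E : ℤ → ℝ be a sequence of nonnegative reals with E(t) = E(0) for all t ≤ 0 and E(t+1) ≤ κ·E(t) + α·μ·∑_{i=1}^{n−1} E(t−i) + α·η_e for every integer t ≥ 0. Then for every integer t ≥ 0, E(t) ≤ ε_t · E(0) + α·η_e/(1 − c), where ε_t is the recursively defined bounding coefficient. -/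
/-! Write `c = κ + α μ (n - 1)` and `D = α ηe / (1 - c)`. The coefficients `ε` satisfy the
homogeneous delay recurrence `ε (t+1) = κ ε t + α μ ∑ ε (t - i)`, and `D` is the fixed point of
`x ↦ c x + α ηe`, so `t ↦ ε t * E 0 + D` solves the noisy recurrence with equality. As all
coefficients are nonnegative, a sub-solution lying below a solution on the history `t ≤ 0` stays
below it for all `t`. -/

open Finset

theorem succ_eq_mul_add_of_closed_form {R : Type*} [CommSemiring R] (κ : R) (x y : ℤ → R)
    (hx : ∀ t : ℤ, 0 ≤ t →
      x t = κ ^ t.toNat + ∑ j ∈ range t.toNat, κ ^ j * y (t - 1 - (j : ℤ))) :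
    ∀ t : ℤ, 0 ≤ t → x (t + 1) = κ * x t + y t := by
  intro t ht
  lift t to ℕ using ht
  have hshift (j : ℕ) : (t : ℤ) + 1 - 1 - ((j + 1 : ℕ) : ℤ) = t - 1 - j := by push_cast; ring
  rw [hx _ (by omega), hx _ (by omega), show ((t : ℤ) + 1).toNat = t + 1 by omega,
    Int.toNat_natCast, sum_range_succ', mul_add, mul_sum]
  simp only [hshift, pow_succ', mul_assoc]
  rw [pow_zero, one_mul, Nat.cast_zero, sub_zero, add_sub_cancel_right, add_assoc]

theorem le_of_delay_recurrence_s12 {κ b d : ℝ} (hκ : 0 ≤ κ) (hb : 0 ≤ b) (S : Finset ℕ)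
    {E F : ℤ → ℝ} (hbase : ∀ t : ℤ, t ≤ 0 → E t ≤ F t)
    (hE : ∀ t : ℤ, 0 ≤ t → E (t + 1) ≤ κ * E t + b * ∑ i ∈ S, E (t - i) + d)
    (hF : ∀ t : ℤ, 0 ≤ t → κ * F t + b * ∑ i ∈ S, F (t - i) + d ≤ F (t + 1)) :
    ∀ t : ℤ, E t ≤ F t := by
  suffices h : ∀ m : ℕ, ∀ t : ℤ, t ≤ m → E t ≤ F t from fun t => h t.toNat t (Int.self_le_toNat t)
  intro m
  induction m with
  | zero => exact_mod_cast hbase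
  | succ m ih =>
    intro t ht
    rcases le_or_gt t m with htm | htm
    · exact ih t htm
    obtain rfl : t = (m : ℤ) + 1 := by push_cast at ht; omega
    calc E (m + 1) ≤ κ * E m + b * ∑ i ∈ S, E (m - i) + d := hE m (by positivity)
      _ ≤ κ * F m + b * ∑ i ∈ S, F (m - i) + d := by
        gcongr with i
        all_goals exact ih _ (by omega)
      _ ≤ F (m + 1) := hF m (by positivity)

theorem affine_delay_recurrence {κ b d D : ℝ} (S : Finset ℕ) {ε : ℤ → ℝ} (A : ℝ)
    (hD : (κ + b * #S) * D + d = D)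
    (hε : ∀ t : ℤ, 0 ≤ t → ε (t + 1) = κ * ε t + b * ∑ i ∈ S, ε (t - i)) (t : ℤ) (ht : 0 ≤ t) :
    κ * (ε t * A + D) + b * ∑ i ∈ S, (ε (t - i) * A + D) + d = ε (t + 1) * A + D := by
  rw [hε t ht, sum_add_distrib, ← sum_mul, sum_const, nsmul_eq_mul]
  linear_combination hD

theorem noisy_fsd_uniform_bound_general
    (n : ℕ) (hn : 2 ≤ n) (κ μ α ηe : ℝ)
    (hκ : 0 ≤ κ) (hμ : 0 ≤ μ) (hα : 0 ≤ α) (hηe : 0 ≤ ηe)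
    (hc : κ + α * μ * ((n : ℝ) - 1) < 1)
    (ε : ℤ → ℝ)
    (hε0 : ∀ t : ℤ, t ≤ 0 → ε t = 1)
    (hεrec : ∀ t : ℤ, 1 ≤ t →
      ε t = κ ^ t.toNat + α * μ * ∑ j ∈ Finset.range t.toNat, κ ^ j *
          ∑ i ∈ Finset.Icc 1 (n - 1), ε (t - 1 - (j : ℤ) - (i : ℤ)))
    (E : ℤ → ℝ) (hEneg : ∀ t : ℤ, t ≤ 0 → E t = E 0)
    (hErec : ∀ t : ℤ, 0 ≤ t →
      E (t + 1) ≤ κ * E t + α * μ * (∑ i ∈ Finset.Icc 1 (n - 1), E (t - (i : ℤ))) + α * ηe) :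
    ∀ t : ℤ, 0 ≤ t →
      E t ≤ ε t * E 0 + α * ηe / (1 - (κ + α * μ * ((n : ℝ) - 1))) := by
  set D := α * ηe / (1 - (κ + α * μ * ((n : ℝ) - 1)))
  have hcard : ((#(Icc 1 (n - 1)) : ℕ) : ℝ) = (n : ℝ) - 1 := by
    rw [Nat.card_Icc, Nat.add_sub_cancel, Nat.cast_pred (by omega)]
  have hD : (κ + α * μ * #(Icc 1 (n - 1))) * D + α * ηe = D := by
    rw [hcard]
    unfold D
    field_simp [(sub_pos.mpr hc).ne']
    ring
  have hεstep := succ_eq_mul_add_of_closed_form κ ε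
    (fun t => α * μ * ∑ i ∈ Icc 1 (n - 1), ε (t - i)) fun t ht => by
      rcases ht.eq_or_lt with rfl | ht
      · simp [hε0]
      · rw [hεrec t ht, mul_sum]
        simp only [mul_left_comm]
  have hbase : ∀ t : ℤ, t ≤ 0 → E t ≤ ε t * E 0 + D := fun t ht => by
    rw [hEneg t ht, hε0 t ht, one_mul, le_add_iff_nonneg_right]
    exact div_nonneg (mul_nonneg hα hηe) (sub_pos.mpr hc).le
  exact fun t _ => le_of_delay_recurrence_s12 hκ (mul_nonneg hα hμ) _ hbase hErec
    (fun t ht => (affine_delay_recurrence _ _ hD hεstep t ht).le) t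

theorem noisy_fsd_uniform_bound
    (n : ℕ) (hn : 2 ≤ n) (κ μ α ηe : ℝ)
    (hκ : 0 ≤ κ) (hμ : 0 ≤ μ) (hα : 0 ≤ α) (hηe : 0 ≤ ηe)
    (hc : κ + α * μ * ((n : ℝ) - 1) < 1)
    (ε : ℤ → ℝ)
    (hε0 : ∀ t : ℤ, t ≤ 0 → ε t = 1)
    (hεrec : ∀ t : ℤ, 1 ≤ t →
      ε t = κ ^ t.toNat + α * μ * ∑ j ∈ Finset.range t.toNat, κ ^ j *
          ∑ i ∈ Finset.Icc 1 (n - 1), ε (t - 1 - (j : ℤ) - (i : ℤ)))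
    (E : ℤ → ℝ) (hEnn : ∀ t : ℤ, 0 ≤ E t) (hEneg : ∀ t : ℤ, t ≤ 0 → E t = E 0)
    (hErec : ∀ t : ℤ, 0 ≤ t →
      E (t + 1) ≤ κ * E t + α * μ * (∑ i ∈ Finset.Icc 1 (n - 1), E (t - (i : ℤ))) + α * ηe) :
    ∀ t : ℤ, 0 ≤ t →
      E t ≤ ε t * E 0 + α * ηe / (1 - (κ + α * μ * ((n : ℝ) - 1))) :=
  noisy_fsd_uniform_bound_general n hn κ μ α ηe hκ hμ hα hηe hc ε hε0 hεrec E hEneg hErec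
end

section
/- (Convergence horizon for noisy Frontal Slice Descent; Theorem 4.4 of the paper made precise.) Let n ≥ 2 be an integer, let κ, μ, α, η_e be nonnegative reals with c := κ + α·μ·(n−1) < 1, and let E : ℤ → ℝ be a sequence of nonnegative reals with E(t) = E(0) for all t ≤ 0 and E(t+1) ≤ κ·E(t) + α·μ·∑_{i=1}^{n−1} E(t−i) + α·η_e for every integer t ≥ 0. Then limsup_{t→∞} E(t) ≤ α·η_e/(1 − c); in particular, when η_e = 0 the error converges to 0, and in general the error eventually enters any neighborhood of the horizon α·η_e/(1−c). -/
/-!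
With `c = κ + β · #s < 1`, the affine map `B ↦ c B + d` is a contraction with fixed point
`d / (1 - c)`. Any `B ≥ max (sup_{t ≤ 0} E t) (d / (1 - c))` satisfies `c B + d ≤ B`, so by strong
induction it bounds `E` everywhere. Once the sequence is bounded, an eventual bound `B` on `E`
propagates through the delayed recursion to the eventual bound `c B + d`; applied to every
`B > limsup E`, this gives `limsup E ≤ c · limsup E + d`, i.e. `limsup E ≤ d / (1 - c)`.
-/

open Matrix Finset Filter

open Topology

section DelayedRecursion

variable {κ β d : ℝ} {s : Finset ℕ} {E : ℤ → ℝ}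

lemma delayed_step_le (hκ : 0 ≤ κ) (hβ : 0 ≤ β) {t : ℤ} {B : ℝ}
    (hrec : E (t + 1) ≤ κ * E t + β * ∑ i ∈ s, E (t - i) + d)
    (ht : E t ≤ B) (hlag : ∀ i ∈ s, E (t - i) ≤ B) :
    E (t + 1) ≤ (κ + β * #s) * B + d :=
  calc E (t + 1) ≤ κ * E t + β * ∑ i ∈ s, E (t - i) + d := hrec
    _ ≤ κ * B + β * ∑ _i ∈ s, B + d := by gcongr with i hi; exact hlag i hi
    _ = (κ + β * #s) * B + d := by rw [sum_const, nsmul_eq_mul]; ring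

variable (hκ : 0 ≤ κ) (hβ : 0 ≤ β)
    (hrec : ∀ t : ℤ, 0 ≤ t → E (t + 1) ≤ κ * E t + β * ∑ i ∈ s, E (t - i) + d)
include hκ hβ hrec

lemma le_of_delayed_recursion {B : ℝ} (hpast : ∀ t ≤ 0, E t ≤ B)
    (hB : (κ + β * #s) * B + d ≤ B) (t : ℤ) : E t ≤ B := by
  suffices h : ∀ k : ℕ, ∀ t ≤ (k : ℤ), E t ≤ B from h t.toNat t (Int.self_le_toNat t)
  intro k
  induction k with
  | zero => exact_mod_cast hpast
  | succ k ih =>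
    intro t ht
    rcases le_or_gt t k with htk | htk
    · exact ih t htk
    obtain rfl : t = k + 1 := by push_cast at ht; omega
    exact (delayed_step_le hκ hβ (hrec k k.cast_nonneg) (ih k le_rfl)
      fun i _ => ih _ (by omega)).trans hB

lemma eventually_le_of_delayed_recursion {B : ℝ} (h : ∀ᶠ t : ℕ in atTop, E t ≤ B) :
    ∀ᶠ t : ℕ in atTop, E t ≤ (κ + β * #s) * B + d := by
  obtain ⟨T, hT⟩ := eventually_atTop.mp h
  refine eventually_atTop.mpr ⟨T + s.sup id + 1, fun t ht => ?_⟩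
  obtain ⟨r, rfl⟩ : ∃ r, t = r + 1 := ⟨t - 1, by omega⟩
  push_cast
  refine delayed_step_le hκ hβ (hrec r r.cast_nonneg) (hT r (by omega)) fun i hi => ?_
  have hi_le : i ≤ s.sup id := le_sup (f := id) hi
  rw [show (r : ℤ) - i = ((r - i : ℕ) : ℤ) by omega]
  exact hT _ (by omega)

lemma limsup_le_of_delayed_recursion
    (hbdd : IsBoundedUnder (· ≤ ·) atTop fun t : ℕ => E t)
    (hcobdd : IsCoboundedUnder (· ≤ ·) atTop fun t : ℕ => E t) :
    limsup (fun t : ℕ => E t) atTop ≤ (κ + β * #s) * limsup (fun t : ℕ => E t) atTop + d := by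
  set ℓ := limsup (fun t : ℕ => E t) atTop
  have hgt : ∀ B > ℓ, ℓ ≤ (κ + β * #s) * B + d := fun B hB =>
    limsup_le_of_le hcobdd <| eventually_le_of_delayed_recursion hκ hβ hrec <|
      (eventually_lt_of_limsup_lt hB hbdd).mono fun _ => le_of_lt
  have hcont : Continuous fun B => (κ + β * #s) * B + d := by fun_prop
  have hev : ∀ᶠ B in 𝓝[>] ℓ, ℓ ≤ (κ + β * #s) * B + d := eventually_nhdsWithin_of_forall hgt
  exact ge_of_tendsto ((hcont.tendsto ℓ).mono_left nhdsWithin_le_nhds) hev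

lemma isBoundedUnder_of_delayed_recursion (hc : κ + β * #s < 1) {A : ℝ}
    (hpast : ∀ t ≤ 0, E t ≤ A) : IsBoundedUnder (· ≤ ·) atTop fun t : ℕ => E t := by
  have hgap : 0 < 1 - (κ + β * #s) := by linarith
  set B := max A (d / (1 - (κ + β * #s)))
  have hfix : (κ + β * #s) * B + d ≤ B := by
    have := mul_le_mul_of_nonneg_left (le_max_right A (d / (1 - (κ + β * #s)))) hgap.le
    rw [mul_div_cancel₀ _ hgap.ne'] at this
    linarith
  exact isBoundedUnder_of ⟨B, fun t => le_of_delayed_recursion hκ hβ hrec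
    (fun t ht => (hpast t ht).trans (le_max_left _ _)) hfix t⟩

theorem limsup_le_div_of_delayed_recursion (hc : κ + β * #s < 1) {A : ℝ}
    (hpast : ∀ t ≤ 0, E t ≤ A) (hnonneg : ∀ t, 0 ≤ E t) :
    limsup (fun t : ℕ => E t) atTop ≤ d / (1 - (κ + β * #s)) := by
  have hcobdd : IsCoboundedUnder (· ≤ ·) atTop fun t : ℕ => E t :=
    (isBoundedUnder_of ⟨0, fun t : ℕ => hnonneg t⟩).isCoboundedUnder_le
  rw [le_div_iff₀ (by linarith)]
  linarith [limsup_le_of_delayed_recursion hκ hβ hrec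
    (isBoundedUnder_of_delayed_recursion hκ hβ hrec hc hpast) hcobdd]

end DelayedRecursion

lemma tendsto_zero_of_nonneg_of_limsup_nonpos {u : ℕ → ℝ} (hnonneg : ∀ t, 0 ≤ u t)
    (hbdd : IsBoundedUnder (· ≤ ·) atTop u) (hlimsup : limsup u atTop ≤ 0) :
    Tendsto u atTop (𝓝 0) :=
  tendsto_of_le_liminf_of_limsup_le
    (le_liminf_of_le hbdd.isCoboundedUnder_ge (Eventually.of_forall hnonneg)) hlimsup hbdd
    (isBoundedUnder_of ⟨0, hnonneg⟩)

theorem noisy_fsd_convergence_horizon_general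
    (n : ℕ) (hn : 2 ≤ n) (κ μ α ηe : ℝ)
    (hκ : 0 ≤ κ) (hμ : 0 ≤ μ) (hα : 0 ≤ α)
    (hc : κ + α * μ * ((n : ℝ) - 1) < 1)
    (E : ℤ → ℝ) (hEnn : ∀ t : ℤ, 0 ≤ E t) (hEneg : ∀ t : ℤ, t ≤ 0 → E t = E 0)
    (hErec : ∀ t : ℤ, 0 ≤ t →
      E (t + 1) ≤ κ * E t + α * μ * (∑ i ∈ Finset.Icc 1 (n - 1), E (t - (i : ℤ))) + α * ηe) :
    Filter.limsup (fun t : ℕ => E (t : ℤ)) Filter.atTop ≤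
        α * ηe / (1 - (κ + α * μ * ((n : ℝ) - 1))) ∧
      (ηe = 0 → Filter.Tendsto (fun t : ℕ => E (t : ℤ)) Filter.atTop (nhds 0)) := by
  have hcard : ((#(Icc 1 (n - 1)) : ℕ) : ℝ) = (n : ℝ) - 1 := by
    rw [Nat.card_Icc, Nat.add_sub_cancel, Nat.cast_sub (by omega), Nat.cast_one]
  have hc' : κ + α * μ * #(Icc 1 (n - 1)) < 1 := by rwa [hcard]
  have hpast : ∀ t ≤ 0, E t ≤ E 0 := fun t ht => (hEneg t ht).le
  have hlimsup := limsup_le_div_of_delayed_recursion hκ (mul_nonneg hα hμ) hErec hc' hpast hEnn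
  rw [hcard] at hlimsup
  refine ⟨hlimsup, fun hηe => tendsto_zero_of_nonneg_of_limsup_nonpos (fun t => hEnn t)
    (isBoundedUnder_of_delayed_recursion hκ (mul_nonneg hα hμ) hErec hc' hpast) ?_⟩
  simpa [hηe] using hlimsup

theorem noisy_fsd_convergence_horizon
    (n : ℕ) (hn : 2 ≤ n) (κ μ α ηe : ℝ)
    (hκ : 0 ≤ κ) (hμ : 0 ≤ μ) (hα : 0 ≤ α) (hηe : 0 ≤ ηe)
    (hc : κ + α * μ * ((n : ℝ) - 1) < 1)
    (ε : ℤ → ℝ)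
    (hε0 : ∀ t : ℤ, t ≤ 0 → ε t = 1)
    (hεrec : ∀ t : ℤ, 1 ≤ t →
      ε t = κ ^ t.toNat + α * μ * ∑ j ∈ Finset.range t.toNat, κ ^ j *
          ∑ i ∈ Finset.Icc 1 (n - 1), ε (t - 1 - (j : ℤ) - (i : ℤ)))
    (E : ℤ → ℝ) (hEnn : ∀ t : ℤ, 0 ≤ E t) (hEneg : ∀ t : ℤ, t ≤ 0 → E t = E 0)
    (hErec : ∀ t : ℤ, 0 ≤ t →
      E (t + 1) ≤ κ * E t + α * μ * (∑ i ∈ Finset.Icc 1 (n - 1), E (t - (i : ℤ))) + α * ηe) :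
    Filter.limsup (fun t : ℕ => E (t : ℤ)) Filter.atTop ≤
        α * ηe / (1 - (κ + α * μ * ((n : ℝ) - 1))) ∧
      (ηe = 0 → Filter.Tendsto (fun t : ℕ => E (t : ℤ)) Filter.atTop (nhds 0)) :=
  noisy_fsd_convergence_horizon_general n hn κ μ α ηe hκ hμ hα hc E hEnn hEneg hErec
end
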